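/- Fix n ≥ m ≥ 2 and 1 ≤ k < m. The sets T(k,t), for t ranging over m-1 ≤ t ≤ n-1, partition into the two-fold decomposition: for m ≤ t < n, T(k,t) is the disjoint union of T(k-1,t) and the set {τ ∈ T(k,t) : τ_{k-1} ≠ b(k-1,t)}; moreover the latter set is in bijection with T(k, t-1). -/

import Mathlib

/-!
The condition defining `T n m (k-1) t` is that of `T n m k t` plus `τ_k = τ_{k-1} + 1`. On
`T n m k t` the tail `τ_k, …, τ_{m-1}` is forced to be `b k t, …, t`, so the extra condition
says exactly `τ_{k-1} = b (k-1) t`; this gives the disjoint union. For the remaining sequences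
`τ_{k-1} + 1 < τ_k`, which is precisely the room needed to lower the whole tail by one while
keeping the sequence strictly increasing; conversely raising the tail of a sequence in
`T n m k (t-1)` stays below `τ_m = n` because `t < n`.
-/

open Fin.NatCast

/-- Changepoint sequences: strictly increasing `τ_0 = 0 < τ_1 < ... < τ_m = n`. -/
def CP (n m : ℕ) : Set (Fin (m + 1) → ℕ) :=
  {τ | StrictMono τ ∧ τ 0 = 0 ∧ τ (Fin.last m) = n}

/-- `T n m k t`: changepoint sequences with `τ (m-1) = t` whose entries at
indices `k, k+1, ..., m-1` are consecutive. -/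
def T (n m k t : ℕ) : Set (Fin (m + 1) → ℕ) :=
  {τ | τ ∈ CP n m ∧ τ ((m - 1 : ℕ) : Fin (m + 1)) = t ∧
    ∀ i : ℕ, k ≤ i → i + 1 < m →
      τ ((i + 1 : ℕ) : Fin (m + 1)) = τ ((i : ℕ) : Fin (m + 1)) + 1}

/-- `b m j t = t - ((m-1) - j)`. -/
def b (m j t : ℕ) : ℕ := t - ((m - 1) - j)

section Changepoints

variable {n m k t : ℕ}

def mapTail (k m : ℕ) (g : ℕ → ℕ) (τ : Fin (m + 1) → ℕ) (i : Fin (m + 1)) : ℕ :=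
  if k ≤ (i : ℕ) ∧ (i : ℕ) < m then g (τ i) else τ i

lemma mapTail_natCast {g : ℕ → ℕ} {τ : Fin (m + 1) → ℕ} {i : ℕ} (hi : i ≤ m) :
    mapTail k m g τ (i : Fin (m + 1)) = if k ≤ i ∧ i < m then g (τ i) else τ i := by
  simp only [mapTail, Fin.val_cast_of_lt (Nat.lt_succ_of_le hi)]

lemma mapTail_mapTail_of_forall {f g : ℕ → ℕ} {τ : Fin (m + 1) → ℕ}
    (h : ∀ i : Fin (m + 1), k ≤ (i : ℕ) → g (f (τ i)) = τ i) :
    mapTail k m g (mapTail k m f τ) = τ := by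
  funext i
  by_cases hi : k ≤ (i : ℕ) ∧ (i : ℕ) < m <;> simp [mapTail, hi, h]

lemma strictMono_iff_lt_natCast_succ {α : Type*} [Preorder α] {τ : Fin (m + 1) → α} :
    StrictMono τ ↔ ∀ i, i < m → τ (i : Fin (m + 1)) < τ ((i + 1 : ℕ) : Fin (m + 1)) := by
  have hcast : ∀ i : Fin m, i.castSucc = ((i : ℕ) : Fin (m + 1)) ∧
      i.succ = (((i : ℕ) + 1 : ℕ) : Fin (m + 1)) := fun i =>
    ⟨Fin.ext (Fin.val_cast_of_lt (by omega)).symm,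
      Fin.ext (Fin.val_cast_of_lt (Nat.succ_lt_succ i.isLt)).symm⟩
  rw [Fin.strictMono_iff_lt_succ]
  refine ⟨fun h i hi => ?_, fun h i => ?_⟩
  · rw [← (hcast ⟨i, hi⟩).1, ← (hcast ⟨i, hi⟩).2]
    exact h ⟨i, hi⟩
  · rw [(hcast i).1, (hcast i).2]
    exact h i i.isLt

lemma mem_T_iff {τ : Fin (m + 1) → ℕ} :
    τ ∈ T n m k t ↔
      (∀ i, i < m → τ (i : Fin (m + 1)) < τ ((i + 1 : ℕ) : Fin (m + 1))) ∧
      τ ((0 : ℕ) : Fin (m + 1)) = 0 ∧ τ ((m : ℕ) : Fin (m + 1)) = n ∧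
      τ ((m - 1 : ℕ) : Fin (m + 1)) = t ∧
      (∀ i, k ≤ i → i + 1 < m →
        τ ((i + 1 : ℕ) : Fin (m + 1)) = τ (i : Fin (m + 1)) + 1) := by
  rw [T, CP, Set.mem_ofPred_eq, Set.mem_ofPred_eq, strictMono_iff_lt_natCast_succ, Nat.cast_zero,
    Fin.natCast_eq_last, and_assoc, and_assoc]

lemma pos_of_mem_CP {τ : Fin (m + 1) → ℕ} (hτ : τ ∈ CP n m) {i : Fin (m + 1)}
    (hi : 0 < (i : ℕ)) : 0 < τ i := by
  obtain ⟨hmono, h0, -⟩ := hτ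
  exact h0 ▸ hmono (Fin.lt_def.2 hi)

lemma T_subset_T_of_le {j : ℕ} (hjk : j ≤ k) : T n m j t ⊆ T n m k t :=
  fun _ ⟨hτ, ht, hrun⟩ => ⟨hτ, ht, fun i hki => hrun i (hjk.trans hki)⟩

/-- That is, `τ j = b m j t`, in a form free of truncated subtraction. -/
lemma apply_add_eq_of_mem_T {τ : Fin (m + 1) → ℕ} (hτ : τ ∈ T n m k t) {j : ℕ}
    (hkj : k ≤ j) (hjm : j < m) : τ (j : Fin (m + 1)) + (m - 1 - j) = t := by
  obtain ⟨-, -, -, ht, hrun⟩ := mem_T_iff.1 hτ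
  obtain ⟨d, hd⟩ : ∃ d, j + d = m - 1 := ⟨m - 1 - j, by omega⟩
  induction d generalizing j with
  | zero =>
    rw [show j = m - 1 by omega]
    omega
  | succ d ih =>
    have := ih (j := j + 1) (by omega) (by omega) (by omega)
    have := hrun j hkj (by omega)
    omega

lemma mem_T_pred_iff (hk : 1 ≤ k) (hkm : k < m) {τ : Fin (m + 1) → ℕ} :
    τ ∈ T n m (k - 1) t ↔
      τ ∈ T n m k t ∧ τ ((k - 1 : ℕ) : Fin (m + 1)) = b m (k - 1) t := by
  have hkk : k - 1 + 1 = k := Nat.sub_add_cancel hk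
  refine ⟨fun hτ => ⟨T_subset_T_of_le (Nat.sub_le k 1) hτ, ?_⟩, fun ⟨hτ, hb⟩ => ?_⟩
  · have := apply_add_eq_of_mem_T hτ le_rfl (by omega)
    unfold b
    omega
  · obtain ⟨hlt, h0, hn, ht, hrun⟩ := mem_T_iff.1 hτ
    refine mem_T_iff.2 ⟨hlt, h0, hn, ht, fun i hki hi => ?_⟩
    rcases (show i = k - 1 ∨ k ≤ i by omega) with rfl | hki
    · have hval := apply_add_eq_of_mem_T hτ le_rfl hkm
      have hmono := hlt (k - 1) (by omega)
      rw [hkk] at hmono ⊢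
      unfold b at hb
      omega
    · exact hrun i hki hi

lemma gap_iff_ne_b (hk : 1 ≤ k) (hkm : k < m) {τ : Fin (m + 1) → ℕ}
    (hτ : τ ∈ T n m k t) :
    τ ((k - 1 : ℕ) : Fin (m + 1)) + 1 < τ (k : Fin (m + 1)) ↔
      τ ((k - 1 : ℕ) : Fin (m + 1)) ≠ b m (k - 1) t := by
  have hval := apply_add_eq_of_mem_T hτ le_rfl hkm
  have hmono := (mem_T_iff.1 hτ).1 (k - 1) (by omega)
  rw [Nat.sub_add_cancel hk] at hmono
  unfold b
  omega

lemma mapTail_pred_mem_T (hk : 1 ≤ k) (hkm : k < m) {τ : Fin (m + 1) → ℕ}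
    (hτ : τ ∈ T n m k (t + 1))
    (hgap : τ ((k - 1 : ℕ) : Fin (m + 1)) + 1 < τ (k : Fin (m + 1))) :
    mapTail k m (· - 1) τ ∈ T n m k t := by
  obtain ⟨hlt, h0, hn, ht, hrun⟩ := mem_T_iff.1 hτ
  have hpos : ∀ i, k ≤ i → i ≤ m → 0 < τ (i : Fin (m + 1)) := fun i hki him =>
    pos_of_mem_CP hτ.1 (by rw [Fin.val_cast_of_lt (Nat.lt_succ_of_le him)]; omega)
  refine mem_T_iff.2 ⟨fun i hi => ?_, ?_, ?_, ?_, fun i hki hi => ?_⟩ <;>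
    simp (disch := omega) only [mapTail_natCast]
  · have hgap' : i + 1 = k → τ (i : Fin (m + 1)) + 1 < τ ((i + 1 : ℕ) : Fin (m + 1)) := by
      rintro rfl
      simpa using hgap
    have := hlt i hi
    by_cases hki : k ≤ i
    · have := hpos i hki hi.le
      split_ifs <;> omega
    · split_ifs <;> omega
  · rwa [if_neg (by omega)]
  · rwa [if_neg (by omega)]
  · rw [if_pos (by omega)]
    omega
  · rw [if_pos (by omega), if_pos (by omega), hrun i hki hi]
    have := hpos i hki (by omega)
    omega

lemma mapTail_succ_mem_T (hk : 1 ≤ k) (hkm : k < m) (htn : t + 1 < n) {σ : Fin (m + 1) → ℕ}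
    (hσ : σ ∈ T n m k t) : mapTail k m (· + 1) σ ∈ T n m k (t + 1) := by
  obtain ⟨hlt, h0, hn, ht, hrun⟩ := mem_T_iff.1 hσ
  refine mem_T_iff.2 ⟨fun i hi => ?_, ?_, ?_, ?_, fun i hki hi => ?_⟩ <;>
    simp (disch := omega) only [mapTail_natCast]
  · have hlast : i + 1 = m → σ (i : Fin (m + 1)) + 1 < σ ((i + 1 : ℕ) : Fin (m + 1)) := by
      rintro rfl
      simp only [Nat.add_sub_cancel] at ht
      omega
    have := hlt i hi
    split_ifs <;> omega
  · rwa [if_neg (by omega)]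
  · rwa [if_neg (by omega)]
  · rw [if_pos (by omega), ht]
  · rw [if_pos (by omega), if_pos (by omega), hrun i hki hi]

lemma bijOn_mapTail_pred (hk : 1 ≤ k) (hkm : k < m) (htn : t + 1 < n) :
    Set.BijOn (mapTail k m (· - 1))
      {τ ∈ T n m k (t + 1) | τ ((k - 1 : ℕ) : Fin (m + 1)) ≠ b m (k - 1) (t + 1)}
      (T n m k t) := by
  refine Set.InvOn.bijOn (f' := mapTail k m (· + 1)) ⟨?_, ?_⟩ ?_ ?_
  · rintro τ ⟨hτ, -⟩
    exact mapTail_mapTail_of_forall fun i hki => Nat.sub_add_cancel (pos_of_mem_CP hτ.1 (by omega))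
  · intro σ _
    exact mapTail_mapTail_of_forall fun i _ => Nat.add_sub_cancel _ _
  · rintro τ ⟨hτ, hb⟩
    exact mapTail_pred_mem_T hk hkm hτ ((gap_iff_ne_b hk hkm hτ).2 hb)
  · intro σ hσ
    have hτ := mapTail_succ_mem_T hk hkm htn hσ
    refine ⟨hτ, (gap_iff_ne_b hk hkm hτ).1 ?_⟩
    have hmono := (mem_T_iff.1 hσ).1 (k - 1) (by omega)
    rw [Nat.sub_add_cancel hk] at hmono
    simp (disch := omega) only [mapTail_natCast]
    rw [if_neg (by omega), if_pos (by omega)]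
    omega

end Changepoints

theorem stmt14_general (n m k : ℕ) (hk : 1 ≤ k) (hkm : k < m) :
    ∀ t : ℕ, m ≤ t → t < n →
      T n m k t =
          T n m (k - 1) t ∪ {τ ∈ T n m k t | τ ((k - 1 : ℕ) : Fin (m + 1)) ≠ b m (k - 1) t} ∧
        Disjoint (T n m (k - 1) t)
          {τ ∈ T n m k t | τ ((k - 1 : ℕ) : Fin (m + 1)) ≠ b m (k - 1) t} ∧
        Set.BijOn
          (fun (τ : Fin (m + 1) → ℕ) (i : Fin (m + 1)) =>
            if k ≤ (i : ℕ) ∧ (i : ℕ) < m then τ i - 1 else τ i)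
          {τ ∈ T n m k t | τ ((k - 1 : ℕ) : Fin (m + 1)) ≠ b m (k - 1) t}
          (T n m k (t - 1)) := by
  intro t htm htn
  refine ⟨?_, ?_, ?_⟩
  · ext τ
    simp only [Set.mem_union, Set.mem_sep_iff, mem_T_pred_iff hk hkm]
    tauto
  · rw [Set.disjoint_left]
    rintro τ hτ ⟨-, hne⟩
    exact hne ((mem_T_pred_iff hk hkm).1 hτ).2
  · obtain ⟨s, rfl⟩ : ∃ s, t = s + 1 := ⟨t - 1, by omega⟩
    exact bijOn_mapTail_pred hk hkm htn

/-- Two-fold decomposition: for `m ≤ t < n`, the set `T k t` is the disjoint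
union of `T (k-1) t` and `{τ ∈ T k t | τ (k-1) ≠ b (k-1) t}`, and the latter set
is in bijection with `T k (t-1)` (by shifting coordinates `k, ..., m-1` down by one). -/
theorem stmt14 (n m k : ℕ) (hm : 2 ≤ m) (hk : 1 ≤ k) (hkm : k < m) :
    ∀ t : ℕ, m ≤ t → t < n →
      T n m k t =
          T n m (k - 1) t ∪ {τ ∈ T n m k t | τ ((k - 1 : ℕ) : Fin (m + 1)) ≠ b m (k - 1) t} ∧
        Disjoint (T n m (k - 1) t)
          {τ ∈ T n m k t | τ ((k - 1 : ℕ) : Fin (m + 1)) ≠ b m (k - 1) t} ∧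
        Set.BijOn
          (fun (τ : Fin (m + 1) → ℕ) (i : Fin (m + 1)) =>
            if k ≤ (i : ℕ) ∧ (i : ℕ) < m then τ i - 1 else τ i)
          {τ ∈ T n m k t | τ ((k - 1 : ℕ) : Fin (m + 1)) ≠ b m (k - 1) t}
          (T n m k (t - 1)) :=
  stmt14_general n m k hk hkm
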